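/- Let R be a commutative ring, S a commutative R-algebra, ξ ∈ S such that 1, ξ, ..., ξ^{n-1} is an R-basis of R[ξ] and f(ξ) = 0 where f ∈ R[X] is monic of degree n with companion matrix C. If α, β ∈ R[ξ] have coordinate vectors [α], [β] ∈ R^n relative to this basis, then the coordinate vector of the product satisfies [αβ] = (I C ... C^{n-1})([α] ⊗ [β]). -/

import Mathlib

/-! The companion matrix `C` of `f` is the matrix of multiplication by `ξ` in the coordinates
`1, ξ, …, ξ^{n-1}`, because `ξ^n = -∑ f_i ξ^i`. Hence `C^k [α]` represents `α ξ^k`, and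
`(I C … C^{n-1})([α] ⊗ [β]) = ∑ β_k C^k [α]` represents `α ∑ β_k ξ^k = αβ`. Coordinates are
unique by linear independence of the powers of `ξ`. -/

open Polynomial Matrix

/-- The companion matrix of a (monic, degree n) polynomial f:
columns C·e_j = e_{j+1} for j < n-1, and last column = -(coefficients of f). -/
def companionM {R : Type*} [CommRing R] (n : ℕ) (f : R[X]) : Matrix (Fin n) (Fin n) R :=
  fun i j => if (j : ℕ) = n - 1 then -f.coeff i else if (i : ℕ) = (j : ℕ) + 1 then 1 else 0

/-- Left Kronecker product of two vectors in R^n, as a vector in R^{n²}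
indexed by Fin n × Fin n; block p.2 of the result is x · y_{p.2}. -/
def kron {R : Type*} [CommRing R] {n : ℕ} (x y : Fin n → R) : Fin n × Fin n → R :=
  fun p => x p.1 * y p.2

/-- The n × n² block matrix (I C C² ... C^{n-1}). -/
def powBlocks {R : Type*} [CommRing R] {n : ℕ} (C : Matrix (Fin n) (Fin n) R) :
    Matrix (Fin n) (Fin n × Fin n) R :=
  fun i p => (C ^ (p.2 : ℕ)) i p.1

/-- The coefficient vector in R^n of a polynomial (of degree < n). -/
def coeffVec {R : Type*} [CommRing R] (n : ℕ) (p : R[X]) : Fin n → R := fun i => p.coeff i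

section

variable {R S : Type*} [CommRing R] [Ring S] [Algebra R S] {n : ℕ} {ξ : S} {f : R[X]}

theorem pow_natDegree_eq_neg_sum_of_aeval_eq_zero (hf : f.Monic) (hdeg : f.natDegree = n)
    (hroot : aeval ξ f = 0) : ξ ^ n = -∑ i : Fin n, f.coeff i • ξ ^ (i : ℕ) := by
  rw [hf.as_sum, hdeg] at hroot
  simpa [Finset.sum_range, Algebra.smul_def, eq_neg_iff_add_eq_zero] using hroot

theorem sum_companionM_smul_pow (hf : f.Monic) (hdeg : f.natDegree = n)
    (hroot : aeval ξ f = 0) (j : Fin n) :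
    ∑ i : Fin n, companionM n f i j • ξ ^ (i : ℕ) = ξ ^ ((j : ℕ) + 1) := by
  by_cases hj : (j : ℕ) = n - 1
  · rw [show (j : ℕ) + 1 = n by omega, pow_natDegree_eq_neg_sum_of_aeval_eq_zero hf hdeg hroot]
    simp [companionM, hj]
  · rw [Finset.sum_eq_single ⟨j + 1, by omega⟩]
    · simp [companionM, hj]
    · intro i _ hi
      simp [companionM, hj, Fin.ext_iff.not.mp hi]
    · simp

theorem linearCombination_companionM_mulVec (hf : f.Monic) (hdeg : f.natDegree = n)
    (hroot : aeval ξ f = 0) (v : Fin n → R) :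
    Fintype.linearCombination R (fun i : Fin n => ξ ^ (i : ℕ)) (companionM n f *ᵥ v) =
      Fintype.linearCombination R (fun i : Fin n => ξ ^ (i : ℕ)) v * ξ := by
  simp only [Fintype.linearCombination_apply, mulVec, dotProduct, Finset.sum_smul, Finset.sum_mul]
  rw [Finset.sum_comm]
  refine Finset.sum_congr rfl fun j _ => ?_
  simp_rw [mul_comm (companionM n f _ j), mul_smul, ← Finset.smul_sum,
    sum_companionM_smul_pow hf hdeg hroot, pow_succ, smul_mul_assoc]

theorem linearCombination_companionM_pow_mulVec (hf : f.Monic) (hdeg : f.natDegree = n)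
    (hroot : aeval ξ f = 0) (m : ℕ) (v : Fin n → R) :
    Fintype.linearCombination R (fun i : Fin n => ξ ^ (i : ℕ)) (companionM n f ^ m *ᵥ v) =
      Fintype.linearCombination R (fun i : Fin n => ξ ^ (i : ℕ)) v * ξ ^ m := by
  induction m with
  | zero => simp
  | succ m ih =>
    rw [pow_succ', ← mulVec_mulVec, linearCombination_companionM_mulVec hf hdeg hroot, ih,
      mul_assoc, ← pow_succ]

end

theorem powBlocks_mulVec_kron {R : Type*} [CommRing R] {n : ℕ} (C : Matrix (Fin n) (Fin n) R)
    (x y : Fin n → R) : powBlocks C *ᵥ kron x y = ∑ k, y k • (C ^ (k : ℕ) *ᵥ x) := by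
  ext i
  simp only [mulVec, dotProduct, powBlocks, kron, Fintype.sum_prod_type, Finset.sum_apply,
    Pi.smul_apply, smul_eq_mul, Finset.mul_sum]
  rw [Finset.sum_comm]
  refine Finset.sum_congr rfl fun k _ => Finset.sum_congr rfl fun j _ => by ring

/-- Theorem 1 of the paper, commutative version: if 1, ξ, ..., ξ^{n-1} is an
R-basis of R[ξ] (expressed as linear independence; they span any element written in them)
and f(ξ) = 0 with f monic of degree n and companion matrix C, then the coordinate vector
of a product is given by [αβ] = (I C ... C^{n-1})([α] ⊗ [β]). -/
theorem product_formula_simple_extension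
    {R S : Type*} [CommRing R] [CommRing S] [Algebra R S]
    (n : ℕ) (ξ : S) (f : R[X]) (hf : f.Monic) (hdeg : f.natDegree = n)
    (hroot : aeval ξ f = 0)
    (hbasis : LinearIndependent R (fun i : Fin n => ξ ^ (i : ℕ)))
    (C : Matrix (Fin n) (Fin n) R) (hC : C = companionM n f)
    (a b c : Fin n → R)
    (hmul : (∑ i : Fin n, a i • ξ ^ (i : ℕ)) * (∑ i : Fin n, b i • ξ ^ (i : ℕ))
            = ∑ i : Fin n, c i • ξ ^ (i : ℕ)) :
    c = (powBlocks C).mulVec (kron a b) := by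
  refine hbasis.fintypeLinearCombination_injective ?_
  rw [hC, powBlocks_mulVec_kron, map_sum]
  simp_rw [map_smul, linearCombination_companionM_pow_mulVec hf hdeg hroot, ← mul_smul_comm,
    ← Finset.mul_sum, Fintype.linearCombination_apply, hmul]
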